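/- arXiv:2107.00211 — 6 statements merged into one kernel-verified Lean document; each statement's English description precedes it below -/
import Mathlib

section
/- The supremum over t in (0, m] of (t-1)^2 / (t ln t - t + 1) equals (m-1)^2 / (m ln m - m + 1) for any m > 1. -/
/-!
With `g t = t log t - t + 1 > 0` for `t ≠ 1`, the function `f t = (t - 1)² / g t` is increasing
on `(1, ∞)`: the numerator of `f'` factors as `(t - 1) ψ t` with `ψ t = (t + 1) log t - 2 (t - 1)`,
and `ψ` is increasing with `ψ 1 = 0`. Moreover `2 g t - (t - 1)² = -φ t` with
`φ t = t² - 1 - 2 t log t` increasing and `φ 1 = 0`, so `f ≤ 2` on `(0, 1)` and `f ≥ 2` on `(1, ∞)`;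
together with the value `2` at `t = 1` this puts the maximum at `t = m`.
-/

open Real Set

lemma monotoneOn_of_hasDerivAt_nonneg {D : Set ℝ} (hD : Convex ℝ D) (hDo : IsOpen D)
    {f f' : ℝ → ℝ} (hf : ∀ x ∈ D, HasDerivAt f (f' x) x) (hf'₀ : ∀ x ∈ D, 0 ≤ f' x) :
    MonotoneOn f D := by
  rw [← hDo.interior_eq] at hf hf'₀
  refine monotoneOn_of_hasDerivWithinAt_nonneg hD (fun x hx ↦ ?_)
    (fun x hx ↦ (hf x hx).hasDerivWithinAt) hf'₀
  rw [← hDo.interior_eq] at hx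
  exact (hf x hx).continuousAt.continuousWithinAt

lemma mul_log_sub_add_one_pos {x : ℝ} (hx : 0 < x) (hx1 : x ≠ 1) :
    0 < x * log x - x + 1 := by
  have h := log_lt_sub_one_of_pos (inv_pos.2 hx) (inv_ne_one.2 hx1)
  rw [log_inv] at h
  have hxx : x * x⁻¹ = 1 := mul_inv_cancel₀ hx.ne'
  nlinarith [mul_lt_mul_of_pos_left (show 1 - x⁻¹ < log x by linarith) hx]

lemma hasDerivAt_mul_log_sub_add_one {x : ℝ} (hx : x ≠ 0) :
    HasDerivAt (fun t ↦ t * log t - t + 1) (log x) x := by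
  simpa using ((hasDerivAt_mul_log hx).sub (hasDerivAt_id x)).add_const 1

lemma monotoneOn_sq_sub_one_sub_two_mul_log :
    MonotoneOn (fun t : ℝ ↦ t ^ 2 - 1 - 2 * (t * log t)) (Ioi 0) := by
  refine monotoneOn_of_hasDerivAt_nonneg (convex_Ioi 0) isOpen_Ioi
    (f' := fun x ↦ 2 * x - 2 * (log x + 1)) (fun x hx ↦ ?_) (fun x hx ↦ ?_)
  · refine (((hasDerivAt_pow 2 x).sub_const 1).fun_sub
      ((hasDerivAt_mul_log (ne_of_gt hx)).const_mul 2)).congr_deriv ?_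
    norm_num
  · linarith [log_le_sub_one_of_pos (show 0 < x from hx)]

lemma monotoneOn_add_one_mul_log_sub_two_mul :
    MonotoneOn (fun t : ℝ ↦ (t + 1) * log t - 2 * (t - 1)) (Ioi 0) := by
  refine monotoneOn_of_hasDerivAt_nonneg (convex_Ioi 0) isOpen_Ioi
    (f' := fun x ↦ log x + (x + 1) * x⁻¹ - 2) (fun x hx ↦ ?_) (fun x hx ↦ ?_)
  · refine ((((hasDerivAt_id' x).add_const 1).fun_mul (hasDerivAt_log (ne_of_gt hx))).fun_sub
      (((hasDerivAt_id' x).sub_const 1).const_mul 2)).congr_deriv ?_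
    ring
  · have hx0 : 0 < x := hx
    have hxx : (x + 1) * x⁻¹ = 1 + x⁻¹ := by field_simp
    linarith [one_sub_inv_le_log_of_pos hx0]

lemma monotoneOn_sq_sub_one_div_mul_log_sub_add_one :
    MonotoneOn (fun t : ℝ ↦ (t - 1) ^ 2 / (t * log t - t + 1)) (Ioi 1) := by
  refine monotoneOn_of_hasDerivAt_nonneg (convex_Ioi 1) isOpen_Ioi
    (f' := fun x ↦ (2 * (x - 1) * (x * log x - x + 1) - (x - 1) ^ 2 * log x) /
      (x * log x - x + 1) ^ 2) (fun x hx ↦ ?_) (fun x hx ↦ ?_)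
  · have hx0 : (0 : ℝ) < x := one_pos.trans hx
    refine ((((hasDerivAt_id' x).sub_const 1).fun_pow 2).fun_div
      (hasDerivAt_mul_log_sub_add_one hx0.ne')
      (mul_log_sub_add_one_pos hx0 (ne_of_gt hx)).ne').congr_deriv ?_
    norm_num
  · have hx1 : (1 : ℝ) < x := hx
    have hψ : 0 ≤ (x + 1) * log x - 2 * (x - 1) := by
      simpa using monotoneOn_add_one_mul_log_sub_two_mul (one_pos : (0 : ℝ) < 1)
        (one_pos.trans hx1) hx1.le
    refine div_nonneg ?_ (sq_nonneg _)
    -- the numerator equals `(x - 1) * ((x + 1) * log x - 2 * (x - 1))`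
    nlinarith [mul_nonneg (sub_pos.2 hx1).le hψ]

/-- For `m > 1`, the supremum over `t ∈ (0, m]` of
`(t-1)^2 / (t ln t - t + 1)` (with continuous extension value `2` at `t = 1`)
equals `(m-1)^2 / (m ln m - m + 1)`, attained at `t = m`. -/
theorem stmt0 (m : ℝ) (hm : 1 < m) :
    IsGreatest
      ((fun t : ℝ => if t = 1 then 2 else (t - 1) ^ 2 / (t * Real.log t - t + 1)) ''
        Set.Ioc 0 m)
      ((m - 1) ^ 2 / (m * Real.log m - m + 1)) := by
  have hm0 : 0 < m := one_pos.trans hm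
  have two_le_at_m : 2 ≤ (m - 1) ^ 2 / (m * log m - m + 1) := by
    have hφ := monotoneOn_sq_sub_one_sub_two_mul_log (one_pos : (0 : ℝ) < 1) hm0 hm.le
    rw [le_div_iff₀ (mul_log_sub_add_one_pos hm0 hm.ne')]
    linarith [log_one]
  refine ⟨⟨m, ⟨hm0, le_rfl⟩, by simp [hm.ne']⟩, ?_⟩
  rintro _ ⟨t, ⟨ht0, htm⟩, rfl⟩
  rcases lt_trichotomy t 1 with ht1 | rfl | ht1
  · have hφ := monotoneOn_sq_sub_one_sub_two_mul_log ht0 (one_pos : (0 : ℝ) < 1) ht1.le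
    have le_two : (t - 1) ^ 2 / (t * log t - t + 1) ≤ 2 := by
      rw [div_le_iff₀ (mul_log_sub_add_one_pos ht0 ht1.ne)]
      linarith [log_one]
    simpa [ht1.ne] using le_two.trans two_le_at_m
  · simpa using two_le_at_m
  · simpa [ht1.ne'] using monotoneOn_sq_sub_one_div_mul_log_sub_add_one ht1 hm htm
end

section
/- The infimum over u in (-1, m-1] (u ≠ 0) of ((1+u) ln(1+u) - u) / u^2 is achieved at u = m-1, for any m > 1. -/
/-! Writing `x = 1 + u`, the numerator is `klFun x = x log x + 1 - x`. Since `x - 1 - log x ≥ 0`,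
the function `(x - 1)² / 2 - klFun x` is increasing and vanishes at `1`, so the quotient
`klFun x / (x - 1)²` is at least `1/2` for `x < 1` and at most `1/2` for `x > 1`. On `(1, ∞)` the
quotient is decreasing, as its derivative has the sign of `2 (x - 1) - (x + 1) log x ≤ 0`.
Hence its least value on `(0, m] \ {1}` is taken at `x = m`. -/

open Real Set InformationTheory

lemma monotoneOn_sq_div_two_sub_klFun :
    MonotoneOn (fun x ↦ (x - 1) ^ 2 / 2 - klFun x) (Ioi 0) := by
  refine monotoneOn_of_hasDerivWithinAt_nonneg (convex_Ioi 0) (by fun_prop)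
    (f' := fun x ↦ x - 1 - log x) (fun x hx ↦ ?_) fun x hx ↦ ?_ <;>
    rw [interior_Ioi] at hx
  · refine HasDerivAt.hasDerivWithinAt ?_
    exact ((((hasDerivAt_id' x).sub_const 1).fun_pow 2).div_const 2).fun_sub
      (hasDerivAt_klFun hx.ne') |>.congr_deriv (by simp)
  · linarith [log_le_sub_one_of_pos hx]

lemma klFun_le_sq_div_two {x : ℝ} (hx : 1 ≤ x) : klFun x ≤ (x - 1) ^ 2 / 2 := by
  have := monotoneOn_sq_div_two_sub_klFun (mem_Ioi.2 one_pos) (mem_Ioi.2 (by linarith)) hx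
  simp only [sub_self, klFun_one] at this
  linarith

lemma sq_div_two_le_klFun {x : ℝ} (hx₀ : 0 < x) (hx : x ≤ 1) : (x - 1) ^ 2 / 2 ≤ klFun x := by
  have := monotoneOn_sq_div_two_sub_klFun hx₀ (mem_Ioi.2 one_pos) hx
  simp only [sub_self, klFun_one] at this
  linarith

lemma antitoneOn_klFun_div_sq : AntitoneOn (fun x ↦ klFun x / (x - 1) ^ 2) (Ioi 1) := by
  have hcont : ContinuousOn (fun x ↦ klFun x / (x - 1) ^ 2) (Ioi 1) :=
    continuous_klFun.continuousOn.div (by fun_prop) fun x hx ↦ by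
      have : x - 1 ≠ 0 := sub_ne_zero.2 (ne_of_gt hx)
      positivity
  refine antitoneOn_of_hasDerivWithinAt_nonpos (convex_Ioi 1) hcont
    (f' := fun x ↦ (2 * (x - 1) - (x + 1) * log x) / (x - 1) ^ 3) (fun x hx ↦ ?_)
    fun x hx ↦ ?_
  all_goals
    rw [interior_Ioi] at hx
    have hx₁ : 0 < x - 1 := sub_pos.2 hx
  · refine HasDerivAt.hasDerivWithinAt <| ((hasDerivAt_klFun (by linarith : x ≠ 0)).fun_div
      (((hasDerivAt_id' x).sub_const 1).fun_pow 2) (by positivity)).congr_deriv ?_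
    rw [klFun_apply]
    field_simp
    ring
  · have := le_log_one_add_of_nonneg hx₁.le
    rw [add_sub_cancel, div_le_iff₀ (by linarith)] at this
    exact div_nonpos_of_nonpos_of_nonneg (by linarith) (by positivity)

lemma klFun_div_sq_le_of_le {m x : ℝ} (hm : 1 < m) (hx₀ : 0 < x) (hxm : x ≤ m) (hx₁ : x ≠ 1) :
    klFun m / (m - 1) ^ 2 ≤ klFun x / (x - 1) ^ 2 := by
  rcases hx₁.lt_or_gt with hx₁ | hx₁
  · have hm₁ : 0 < (m - 1) ^ 2 := by nlinarith
    have hx₁' : 0 < (x - 1) ^ 2 := by nlinarith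
    calc klFun m / (m - 1) ^ 2 ≤ 1 / 2 := by
          rw [div_le_iff₀ hm₁]; linarith [klFun_le_sq_div_two hm.le]
      _ ≤ klFun x / (x - 1) ^ 2 := by
          rw [le_div_iff₀ hx₁']; linarith [sq_div_two_le_klFun hx₀ hx₁.le]
  · exact antitoneOn_klFun_div_sq hx₁ (hx₁.trans_le hxm) hxm

/-- For `m > 1`, the infimum over `u ∈ (-1, m-1]`, `u ≠ 0`, of
`((1+u) ln(1+u) - u)/u²` is `(m ln m - m + 1)/(m-1)²`, attained at `u = m-1`. -/
theorem stmt2 (m : ℝ) (hm : 1 < m) :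
    IsLeast
      ((fun u : ℝ => ((1 + u) * Real.log (1 + u) - u) / u ^ 2) ''
        (Set.Ioc (-1) (m - 1) \ {0}))
      ((m * Real.log m - m + 1) / (m - 1) ^ 2) := by
  refine ⟨⟨m - 1, ⟨⟨by linarith, le_rfl⟩, sub_ne_zero.2 hm.ne'⟩, by ring_nf⟩, ?_⟩
  rintro _ ⟨u, ⟨⟨hu₁, hum⟩, hu₀⟩, rfl⟩
  have := klFun_div_sq_le_of_le hm (x := 1 + u) (by linarith) (by linarith) (by simpa using hu₀)
  rw [klFun_apply, klFun_apply, add_sub_cancel_left] at this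
  convert this using 2 <;> ring
end

section
/- Let ⁿ2 denote the n-th tetration of 2 (⁰2 = 1, ⁿ2 = 2^(ⁿ⁻¹2)). Then e · Σ_{k=1}^∞ (ᵏ2) · exp(-(ᵏ⁻¹2)) < 5. -/
/-!
Since `2 ^ n * e⁻ⁿ = (2 / e) ^ n`, the `k`-th term of the series is `q ^ tet k` with
`q = 2 / e < 3 / 4`. The first two terms contribute `e * (q + q²) = 2 + 2q`. From then on the
exponents grow at least linearly, `tet (k + 2) ≥ 4 (k + 1)`, so the remaining terms are dominated
by the geometric series `∑ (q⁴) ^ (k + 1) = q⁴ / (1 - q⁴)`, and `e q⁴ / (1 - q⁴) = 2 q³ / (1 - q⁴)`.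
-/

open Real

/-- The `n`-th tetration of 2: `tet 0 = 1`, `tet (n+1) = 2 ^ tet n`. -/
def tet : ℕ → ℕ
  | 0 => 1
  | n + 1 => 2 ^ tet n

lemma tet_succ (n : ℕ) : tet (n + 1) = 2 ^ tet n := rfl

lemma four_mul_succ_le_tet_add_two (k : ℕ) : 4 * (k + 1) ≤ tet (k + 2) := by
  induction k with
  | zero => decide
  | succ k ih =>
    obtain ⟨m, hm⟩ : ∃ m, tet (k + 2) = m + 1 := ⟨_, (Nat.succ_pred_eq_of_pos (by omega)).symm⟩
    have : m < 2 ^ m := Nat.lt_two_pow_self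
    rw [tet_succ, hm, pow_succ]
    omega

lemma pow_mul_exp_neg_natCast (a : ℝ) (n : ℕ) : a ^ n * exp (-n) = (a / exp 1) ^ n := by
  rw [div_pow, ← exp_nat_mul, mul_one, exp_neg, div_eq_mul_inv]

lemma tet_succ_mul_exp_neg_tet (k : ℕ) :
    (tet (k + 1) : ℝ) * exp (-(tet k : ℝ)) = (2 / exp 1) ^ tet k := by
  rw [tet_succ, Nat.cast_pow, Nat.cast_ofNat, pow_mul_exp_neg_natCast]

section GeometricMajorant

variable {q : ℝ} {a : ℕ} {g : ℕ → ℕ}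

lemma hasSum_pow_pow_succ (hq₀ : 0 ≤ q) (hq₁ : q < 1) (ha : a ≠ 0) :
    HasSum (fun k : ℕ => (q ^ a) ^ (k + 1)) (q ^ a / (1 - q ^ a)) := by
  simpa only [pow_succ', div_eq_mul_inv] using
    (hasSum_geometric_of_lt_one (pow_nonneg hq₀ a) (pow_lt_one₀ hq₀ hq₁ ha)).mul_left (q ^ a)

lemma pow_comp_le_pow_pow_succ (hq₀ : 0 ≤ q) (hq₁ : q < 1) (hg : ∀ k, a * (k + 1) ≤ g k)
    (k : ℕ) : q ^ g k ≤ (q ^ a) ^ (k + 1) := by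
  rw [← pow_mul]
  exact pow_le_pow_of_le_one hq₀ hq₁.le (hg k)

lemma summable_pow_comp_of_mul_succ_le (hq₀ : 0 ≤ q) (hq₁ : q < 1) (ha : a ≠ 0)
    (hg : ∀ k, a * (k + 1) ≤ g k) : Summable (fun k => q ^ g k) :=
  (hasSum_pow_pow_succ hq₀ hq₁ ha).summable.of_nonneg_of_le (fun _ => pow_nonneg hq₀ _)
    (pow_comp_le_pow_pow_succ hq₀ hq₁ hg)

lemma tsum_pow_comp_le_of_mul_succ_le (hq₀ : 0 ≤ q) (hq₁ : q < 1) (ha : a ≠ 0)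
    (hg : ∀ k, a * (k + 1) ≤ g k) : ∑' k, q ^ g k ≤ q ^ a / (1 - q ^ a) :=
  hasSum_le (pow_comp_le_pow_pow_succ hq₀ hq₁ hg)
    (summable_pow_comp_of_mul_succ_le hq₀ hq₁ ha hg).hasSum (hasSum_pow_pow_succ hq₀ hq₁ ha)

end GeometricMajorant

lemma two_div_exp_one_lt : 2 / exp 1 < 3 / 4 := by
  rw [div_lt_iff₀ (exp_pos 1)]
  linarith [exp_one_gt_d9]

lemma mul_add_pow_lt_five {c q : ℝ} (hcq : c * q = 2) (hq₀ : 0 ≤ q) (hq₁ : q < 3 / 4) :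
    c * (q + q ^ 2 + q ^ 4 / (1 - q ^ 4)) < 5 := by
  have hq3 : q ^ 3 ≤ (3 / 4) ^ 3 := pow_le_pow_left₀ hq₀ hq₁.le 3
  have hq4 : q ^ 4 ≤ (3 / 4) ^ 4 := pow_le_pow_left₀ hq₀ hq₁.le 4
  have hfrac : q ^ 3 / (1 - q ^ 4) ≤ (3 / 4) ^ 3 / (1 - (3 / 4) ^ 4) :=
    div_le_div₀ (by positivity) hq3 (by norm_num) (by linarith)
  calc c * (q + q ^ 2 + q ^ 4 / (1 - q ^ 4))
      = c * q * (1 + q + q ^ 3 / (1 - q ^ 4)) := by ring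
    _ < 5 := by rw [hcq]; norm_num at hfrac ⊢; linarith

/-- `e · Σ_{k=1}^∞ (ᵏ2) · exp(-(ᵏ⁻¹2)) < 5` (and the series converges). -/
theorem stmt4 :
    Summable (fun k : ℕ => (tet (k + 1) : ℝ) * Real.exp (-(tet k : ℝ))) ∧
    Real.exp 1 * ∑' k : ℕ, (tet (k + 1) : ℝ) * Real.exp (-(tet k : ℝ)) < 5 := by
  simp only [tet_succ_mul_exp_neg_tet]
  set q := 2 / exp 1 with hq
  have hq₀ : 0 ≤ q := by positivity
  have hq₁ : q < 1 := two_div_exp_one_lt.trans (by norm_num)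
  have htail := four_mul_succ_le_tet_add_two
  have hsum : Summable (fun k => q ^ tet k) :=
    (summable_nat_add_iff 2).mp (summable_pow_comp_of_mul_succ_le hq₀ hq₁ four_ne_zero htail)
  refine ⟨hsum, ?_⟩
  rw [← hsum.sum_add_tsum_nat_add 2]
  calc exp 1 * (∑ i ∈ Finset.range 2, q ^ tet i + ∑' k, q ^ tet (k + 2))
      ≤ exp 1 * (q + q ^ 2 + q ^ 4 / (1 - q ^ 4)) := by
        gcongr
        · simp [Finset.sum_range_succ, tet]
        · exact tsum_pow_comp_le_of_mul_succ_le hq₀ hq₁ four_ne_zero htail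
    _ < 5 := mul_add_pow_lt_five (by rw [hq, mul_div_cancel₀ 2 (exp_pos 1).ne']) hq₀
      two_div_exp_one_lt
end

section
/- For any positive integer l, there exists a kernel K : ℝ → ℝ of order l that is a linear combination of ⌊l/2⌋+1 indicator functions of symmetric intervals [-k, k], k = 1, ..., ⌊l/2⌋+1; i.e., there exist coefficients c_1, ..., c_{⌊l/2⌋+1} such that K = Σ_k c_k · 1_{[-k,k]} satisfies ∫K = 1 and ∫ u^j K(u) du = 0 for all j = 1, ..., l. -/
/-!
A symmetric step function `K = ∑ c_k 1_{[-k,k]}` has vanishing odd moments, and its moment of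
even order `2i` is `∑ 2 c_k k (k²)^i / (2i + 1)`. Prescribing the even moments of order
`0, 2, …, 2⌊l/2⌋` is therefore a linear system in the `d_k = 2 c_k k` whose matrix is the
transposed Vandermonde matrix of the distinct nodes `k²`, hence invertible.
-/

open MeasureTheory Matrix Set

lemma Matrix.exists_sum_mul_pow_eq {K : Type*} [Field K] {n : ℕ} {v : Fin n → K}
    (hv : Function.Injective v) (b : Fin n → K) :
    ∃ c : Fin n → K, ∀ i : Fin n, ∑ k, c k * v k ^ (i : ℕ) = b i := by
  have hunit : IsUnit (vandermonde v)ᵀ := by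
    rw [isUnit_iff_isUnit_det, det_transpose]
    exact (det_vandermonde_ne_zero_iff.2 hv).isUnit
  obtain ⟨c, hc⟩ := mulVec_surjective_iff_isUnit.2 hunit b
  refine ⟨c, fun i => ?_⟩
  simp only [← hc, mulVec, dotProduct, transpose_apply, vandermonde_apply, mul_comm]

lemma Set.mul_indicator_one_eq_indicator {α M : Type*} [MulZeroOneClass M] (s : Set α)
    (f : α → M) : (fun u => f u * s.indicator (fun _ => (1 : M)) u) = s.indicator f := by
  funext u
  by_cases hu : u ∈ s <;> simp [hu]

lemma integral_pow_mul_indicator_Icc_neg (j : ℕ) {a : ℝ} (ha : 0 ≤ a) :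
    ∫ u : ℝ, u ^ j * (Icc (-a) a).indicator (fun _ => (1 : ℝ)) u
      = (a ^ (j + 1) - (-a) ^ (j + 1)) / (j + 1) := by
  rw [mul_indicator_one_eq_indicator, integral_indicator measurableSet_Icc,
    integral_Icc_eq_integral_Ioc, ← intervalIntegral.integral_of_le (by linarith), integral_pow]

lemma integral_pow_mul_indicator_Icc_neg_of_even {j : ℕ} (hj : Even j) {a : ℝ} (ha : 0 ≤ a) :
    ∫ u : ℝ, u ^ j * (Icc (-a) a).indicator (fun _ => (1 : ℝ)) u
      = 2 * a ^ (j + 1) / (j + 1) := by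
  rw [integral_pow_mul_indicator_Icc_neg j ha, hj.add_one.neg_pow]
  ring

lemma integral_pow_mul_indicator_Icc_neg_of_odd {j : ℕ} (hj : Odd j) {a : ℝ} (ha : 0 ≤ a) :
    ∫ u : ℝ, u ^ j * (Icc (-a) a).indicator (fun _ => (1 : ℝ)) u = 0 := by
  rw [integral_pow_mul_indicator_Icc_neg j ha, hj.add_one.neg_pow, sub_self, zero_div]

lemma integral_pow_mul_sum_indicator_Icc_neg {ι : Type*} (s : Finset ι) (c a : ι → ℝ) (j : ℕ) :
    ∫ u : ℝ, u ^ j * ∑ k ∈ s, c k * (Icc (-a k) (a k)).indicator (fun _ => (1 : ℝ)) u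
      = ∑ k ∈ s, c k * ∫ u : ℝ, u ^ j * (Icc (-a k) (a k)).indicator (fun _ => (1 : ℝ)) u := by
  have hint (k : ι) :
      Integrable fun u : ℝ => u ^ j * (Icc (-a k) (a k)).indicator (fun _ => (1 : ℝ)) u := by
    rw [mul_indicator_one_eq_indicator]
    exact (continuous_pow j).integrableOn_Icc.integrable_indicator measurableSet_Icc
  simp_rw [Finset.mul_sum, mul_left_comm _ (c _)]
  rw [integral_finsetSum _ fun k _ => (hint k).const_mul (c k)]
  simp_rw [integral_const_mul]

lemma integral_pow_mul_sum_indicator_Icc_neg_of_even {ι : Type*} (s : Finset ι) (c : ι → ℝ)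
    {a : ι → ℝ} (ha : ∀ k, 0 ≤ a k) (i : ℕ) :
    ∫ u : ℝ, u ^ (2 * i) * ∑ k ∈ s, c k * (Icc (-a k) (a k)).indicator (fun _ => (1 : ℝ)) u
      = (∑ k ∈ s, 2 * c k * a k * (a k ^ 2) ^ i) / (2 * i + 1) := by
  rw [integral_pow_mul_sum_indicator_Icc_neg, Finset.sum_div]
  refine Finset.sum_congr rfl fun k _ => ?_
  rw [integral_pow_mul_indicator_Icc_neg_of_even (even_two_mul i) (ha k), ← pow_mul]
  push_cast
  ring

lemma integral_pow_mul_sum_indicator_Icc_neg_of_odd {ι : Type*} (s : Finset ι) (c : ι → ℝ)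
    {a : ι → ℝ} (ha : ∀ k, 0 ≤ a k) {j : ℕ} (hj : Odd j) :
    ∫ u : ℝ, u ^ j * ∑ k ∈ s, c k * (Icc (-a k) (a k)).indicator (fun _ => (1 : ℝ)) u = 0 := by
  rw [integral_pow_mul_sum_indicator_Icc_neg]
  exact Finset.sum_eq_zero fun k _ => by
    rw [integral_pow_mul_indicator_Icc_neg_of_odd hj (ha k), mul_zero]

theorem stmt5_general (l : ℕ) :
    ∃ c : Fin (l / 2 + 1) → ℝ,
      (∫ u : ℝ,
          (∑ k : Fin (l / 2 + 1),
            c k * Set.indicator (Set.Icc (-((k : ℝ) + 1)) ((k : ℝ) + 1)) (fun _ => (1 : ℝ)) u))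
        = 1 ∧
      ∀ j : ℕ, 1 ≤ j → j ≤ l →
        (∫ u : ℝ,
            u ^ j * (∑ k : Fin (l / 2 + 1),
              c k * Set.indicator (Set.Icc (-((k : ℝ) + 1)) ((k : ℝ) + 1)) (fun _ => (1 : ℝ)) u))
          = 0 := by
  have hv : Function.Injective fun k : Fin (l / 2 + 1) => ((k : ℝ) + 1) ^ 2 := by
    intro a b hab
    have := (pow_left_inj₀ (by positivity) (by positivity) two_ne_zero).1 hab
    exact Fin.ext (by exact_mod_cast add_right_cancel this)
  obtain ⟨d, hd⟩ := exists_sum_mul_pow_eq hv fun i => if (i : ℕ) = 0 then 1 else 0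
  set c : Fin (l / 2 + 1) → ℝ := fun k => d k / (2 * ((k : ℝ) + 1))
  have hc (k : Fin (l / 2 + 1)) : 2 * c k * ((k : ℝ) + 1) = d k := by
    simp only [c]
    field_simp
  have hmoment : ∀ j ≤ l, ∫ u : ℝ, u ^ j * ∑ k : Fin (l / 2 + 1),
      c k * (Icc (-((k : ℝ) + 1)) ((k : ℝ) + 1)).indicator (fun _ => (1 : ℝ)) u
        = if j = 0 then 1 else 0 := by
    intro j hj
    have ha (k : Fin (l / 2 + 1)) : (0 : ℝ) ≤ k + 1 := by positivity
    rcases Nat.even_or_odd' j with ⟨i, rfl | rfl⟩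
    · rw [integral_pow_mul_sum_indicator_Icc_neg_of_even _ _ ha]
      simp_rw [hc]
      rw [hd ⟨i, by omega⟩]
      split_ifs <;> simp_all
    · rw [integral_pow_mul_sum_indicator_Icc_neg_of_odd _ _ ha (odd_two_mul_add_one i), if_neg]
      omega
  refine ⟨c, by simpa using hmoment 0 (Nat.zero_le l), fun j hj1 hjl => ?_⟩
  simpa [Nat.one_le_iff_ne_zero.1 hj1] using hmoment j hjl

/-- For any positive integer `l`, there is a kernel `K : ℝ → ℝ` of
order `l` which is a linear combination of the `⌊l/2⌋+1` indicator functions of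
the symmetric intervals `[-k, k]`, `k = 1, …, ⌊l/2⌋+1`: it integrates to 1 and
all moments of order `1, …, l` vanish. -/
theorem stmt5 (l : ℕ) (hl : 0 < l) :
    ∃ c : Fin (l / 2 + 1) → ℝ,
      (∫ u : ℝ,
          (∑ k : Fin (l / 2 + 1),
            c k * Set.indicator (Set.Icc (-((k : ℝ) + 1)) ((k : ℝ) + 1)) (fun _ => (1 : ℝ)) u))
        = 1 ∧
      ∀ j : ℕ, 1 ≤ j → j ≤ l →
        (∫ u : ℝ,
            u ^ j * (∑ k : Fin (l / 2 + 1),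
              c k * Set.indicator (Set.Icc (-((k : ℝ) + 1)) ((k : ℝ) + 1)) (fun _ => (1 : ℝ)) u))
          = 0 :=
  stmt5_general l
end

section
/- For a pair of random variables (X, Y) and an r-round interactive protocol U_1, ..., U_r satisfying the Markov chains U_i — (X, U^{i-1}) — Y for odd i and U_i — (Y, U^{i-1}) — X for even i, the following identity holds: Σ_{i odd} I(U_i; Y | U^{i-1}) + Σ_{i even} I(U_i; X | U^{i-1}) = I(X;Y) - I(X;Y | U^r). -/
open Finset

variable {Ω : Type*} [Fintype Ω]

/-- Shannon entropy of the discrete random variable `T` under the pmf `p`. -/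
noncomputable def ent {α : Type*} [DecidableEq α] (p : Ω → ℝ) (T : Ω → α) : ℝ :=
  -∑ ω, p ω * Real.log (∑ ω', if T ω' = T ω then p ω' else 0)

/-- Mutual information `I(X;Y)` under the pmf `p`. -/
noncomputable def mi {α β : Type*} [DecidableEq α] [DecidableEq β]
    (p : Ω → ℝ) (X : Ω → α) (Y : Ω → β) : ℝ :=
  ent p X + ent p Y - ent p (fun ω => (X ω, Y ω))

/-- Conditional mutual information `I(X;Y|Z)` under the pmf `p`. -/
noncomputable def cmi {α β γ : Type*} [DecidableEq α] [DecidableEq β] [DecidableEq γ]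
    (p : Ω → ℝ) (X : Ω → α) (Y : Ω → β) (Z : Ω → γ) : ℝ :=
  ent p (fun ω => (X ω, Z ω)) + ent p (fun ω => (Y ω, Z ω))
    - ent p (fun ω => (X ω, Y ω, Z ω)) - ent p Z

/-- The transcript `U^{i-1}` of the first `i` messages (indices `0, …, i-1`). -/
def hist {r : ℕ} {𝒰 : Type*} (U : Fin r → Ω → 𝒰) (i : ℕ) : Ω → (Fin r → Option 𝒰) :=
  fun ω j => if (j : ℕ) < i then some (U j ω) else none

/-! Each message `U_i` leaks `I(U_i; Y | U^{i-1})` (or `I(U_i; X | U^{i-1})`). Expanding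
`I(U_i X; Y | U^{i-1})` by the chain rule in both orders and using the Markov condition
`I(U_i; Y | X U^{i-1}) = 0`, this leak equals `I(X;Y|U^{i-1}) - I(X;Y|U^i)`, so the sum
telescopes to `I(X;Y|U^0) - I(X;Y|U^r)`, and `U^0` is constant. -/

section InformationMeasures

variable {α β γ δ : Type*} [DecidableEq α] [DecidableEq β] [DecidableEq γ] [DecidableEq δ]

lemma ent_congr (p : Ω → ℝ) (T : Ω → α) (S : Ω → β)
    (h : ∀ ω ω', T ω' = T ω ↔ S ω' = S ω) : ent p T = ent p S := by
  simp only [ent, h]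

lemma ent_const (p : Ω → ℝ) (hp1 : ∑ ω, p ω = 1) (a : α) : ent p (fun _ => a) = 0 := by
  simp [ent, hp1]

lemma cmi_congr_right (p : Ω → ℝ) (A : Ω → α) (B : Ω → β) (Z : Ω → γ) (Z' : Ω → δ)
    (h : ∀ ω ω', Z ω' = Z ω ↔ Z' ω' = Z' ω) : cmi p A B Z = cmi p A B Z' := by
  rw [cmi, cmi, ent_congr p Z Z' h,
    ent_congr p (fun ω => (A ω, Z ω)) (fun ω => (A ω, Z' ω)) (by simp [Prod.ext_iff, h]),
    ent_congr p (fun ω => (B ω, Z ω)) (fun ω => (B ω, Z' ω)) (by simp [Prod.ext_iff, h]),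
    ent_congr p (fun ω => (A ω, B ω, Z ω)) (fun ω => (A ω, B ω, Z' ω))
      (by simp [Prod.ext_iff, h])]

lemma cmi_const_eq_mi (p : Ω → ℝ) (hp1 : ∑ ω, p ω = 1) (X : Ω → α) (Y : Ω → β) (c : γ) :
    cmi p X Y (fun _ => c) = mi p X Y := by
  have hX : ent p (fun ω => (X ω, c)) = ent p X :=
    ent_congr _ _ _ (by simp)
  have hY : ent p (fun ω => (Y ω, c)) = ent p Y :=
    ent_congr _ _ _ (by simp)
  have hXY : ent p (fun ω => (X ω, Y ω, c)) = ent p (fun ω => (X ω, Y ω)) :=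
    ent_congr _ _ _ (by simp)
  rw [cmi, mi, hX, hY, hXY, ent_const p hp1, sub_zero]

lemma cmi_comm (p : Ω → ℝ) (A : Ω → α) (B : Ω → β) (Z : Ω → γ) :
    cmi p A B Z = cmi p B A Z := by
  have hAB : ent p (fun ω => (A ω, B ω, Z ω)) = ent p (fun ω => (B ω, A ω, Z ω)) :=
    ent_congr _ _ _ (by intro ω ω'; simp only [Prod.ext_iff]; tauto)
  rw [cmi, cmi, hAB]
  ring

/-- Both sides equal `I(X V; Y | Z)`. -/
lemma cmi_add_cmi_eq_cmi_add_cmi (p : Ω → ℝ) (V : Ω → δ) (X : Ω → α) (Y : Ω → β)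
    (Z : Ω → γ) :
    cmi p X Y Z + cmi p V Y (fun ω => (X ω, Z ω))
      = cmi p V Y Z + cmi p X Y (fun ω => (V ω, Z ω)) := by
  unfold cmi
  have e1 : ent p (fun ω => (X ω, Y ω, Z ω)) = ent p (fun ω => (Y ω, X ω, Z ω)) :=
    ent_congr _ _ _ (by intro ω ω'; simp only [Prod.ext_iff]; tauto)
  have e2 : ent p (fun ω => (X ω, V ω, Z ω)) = ent p (fun ω => (V ω, X ω, Z ω)) :=
    ent_congr _ _ _ (by intro ω ω'; simp only [Prod.ext_iff]; tauto)
  have e3 : ent p (fun ω => (X ω, Y ω, V ω, Z ω)) = ent p (fun ω => (V ω, Y ω, X ω, Z ω)) :=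
    ent_congr _ _ _ (by intro ω ω'; simp only [Prod.ext_iff]; tauto)
  have e4 : ent p (fun ω => (V ω, Y ω, Z ω)) = ent p (fun ω => (Y ω, V ω, Z ω)) :=
    ent_congr _ _ _ (by intro ω ω'; simp only [Prod.ext_iff]; tauto)
  linarith

lemma cmi_sub_cmi_of_markov (p : Ω → ℝ) (V : Ω → δ) (X : Ω → α) (Y : Ω → β) (Z : Ω → γ)
    (hM : cmi p V Y (fun ω => (X ω, Z ω)) = 0) :
    cmi p X Y Z - cmi p X Y (fun ω => (V ω, Z ω)) = cmi p V Y Z := by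
  linarith [cmi_add_cmi_eq_cmi_add_cmi p V X Y Z]

end InformationMeasures

section Transcript

variable {r : ℕ} {𝒰 : Type*}

omit [Fintype Ω] in
lemma hist_zero (U : Fin r → Ω → 𝒰) : hist U 0 = fun _ _ => none := by
  funext ω j
  simp [hist]

omit [Fintype Ω] in
lemma hist_succ_eq_iff (U : Fin r → Ω → 𝒰) (i : Fin r) (ω ω' : Ω) :
    hist U (i + 1) ω' = hist U (i + 1) ω ↔ U i ω' = U i ω ∧ hist U i ω' = hist U i ω := by
  simp only [hist, funext_iff]
  constructor
  · intro h
    refine ⟨by simpa using h i, fun j => ?_⟩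
    by_cases hj : (j : ℕ) < i
    · simpa [hj, Nat.lt_succ_of_lt hj] using h j
    · simp [hj]
  · rintro ⟨hi, h⟩ j
    rcases lt_trichotomy (j : ℕ) i with hj | hj | hj
    · simpa [hj, Nat.lt_succ_of_lt hj] using h j
    · simp [Fin.ext hj, hi]
    · simp [(Nat.succ_le_of_lt hj).not_gt]

variable [DecidableEq 𝒰] {α β : Type*} [DecidableEq α] [DecidableEq β]

lemma cmi_hist_zero (p : Ω → ℝ) (hp1 : ∑ ω, p ω = 1) (X : Ω → α) (Y : Ω → β)
    (U : Fin r → Ω → 𝒰) : cmi p X Y (hist U 0) = mi p X Y := by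
  rw [hist_zero, cmi_const_eq_mi p hp1]

lemma cmi_hist_succ (p : Ω → ℝ) (X : Ω → α) (Y : Ω → β) (U : Fin r → Ω → 𝒰) (i : Fin r) :
    cmi p X Y (hist U (i + 1)) = cmi p X Y (fun ω => (U i ω, hist U i ω)) :=
  cmi_congr_right _ _ _ _ _ fun ω ω' => by rw [hist_succ_eq_iff, Prod.ext_iff]

end Transcript

theorem stmt7_general {𝒳 𝒴 𝒰 : Type*} [DecidableEq 𝒳] [DecidableEq 𝒴] [DecidableEq 𝒰]
    (r : ℕ) (p : Ω → ℝ) (hp1 : ∑ ω, p ω = 1)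
    (X : Ω → 𝒳) (Y : Ω → 𝒴) (U : Fin r → Ω → 𝒰)
    (hmarkovA : ∀ i : Fin r, Even (i : ℕ) →
      cmi p (U i) Y (fun ω => (X ω, hist U (i : ℕ) ω)) = 0)
    (hmarkovB : ∀ i : Fin r, ¬ Even (i : ℕ) →
      cmi p (U i) X (fun ω => (Y ω, hist U (i : ℕ) ω)) = 0) :
    (∑ i : Fin r,
        if Even (i : ℕ) then cmi p (U i) Y (hist U (i : ℕ))
        else cmi p (U i) X (hist U (i : ℕ)))
      = mi p X Y - cmi p X Y (hist U r) := by
  set g : ℕ → ℝ := fun n => cmi p X Y (hist U n)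
  have leak : ∀ i : Fin r,
      (if Even (i : ℕ) then cmi p (U i) Y (hist U i) else cmi p (U i) X (hist U i))
        = g i - g (i + 1) := by
    intro i
    simp only [g, cmi_hist_succ]
    split_ifs with hi
    · exact (cmi_sub_cmi_of_markov p (U i) X Y _ (hmarkovA i hi)).symm
    · rw [cmi_comm p X Y, cmi_comm p X Y]
      exact (cmi_sub_cmi_of_markov p (U i) Y X _ (hmarkovB i hi)).symm
  rw [Finset.sum_congr rfl fun i _ => leak i, Fin.sum_univ_eq_sum_range (fun n => g n - g (n + 1)),
    Finset.sum_range_sub', ← cmi_hist_zero p hp1 X Y U]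

/-- For an `r`-round interactive protocol `U_1, …, U_r`
(here indexed `0, …, r-1`, message `i` sent by Alice when `i` is even, i.e. the
round number `i+1` is odd) satisfying the Markov chains
`U_i — (X, U^{i-1}) — Y` for odd rounds and `U_i — (Y, U^{i-1}) — X` for even
rounds (expressed as vanishing conditional mutual information),
`Σ_{i odd} I(U_i; Y | U^{i-1}) + Σ_{i even} I(U_i; X | U^{i-1})
  = I(X;Y) - I(X;Y | U^r)`. -/
theorem stmt7 {𝒳 𝒴 𝒰 : Type*} [DecidableEq 𝒳] [DecidableEq 𝒴] [DecidableEq 𝒰]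
    (r : ℕ) (p : Ω → ℝ) (hp : ∀ ω, 0 ≤ p ω) (hp1 : ∑ ω, p ω = 1)
    (X : Ω → 𝒳) (Y : Ω → 𝒴) (U : Fin r → Ω → 𝒰)
    (hmarkovA : ∀ i : Fin r, Even (i : ℕ) →
      cmi p (U i) Y (fun ω => (X ω, hist U (i : ℕ) ω)) = 0)
    (hmarkovB : ∀ i : Fin r, ¬ Even (i : ℕ) →
      cmi p (U i) X (fun ω => (Y ω, hist U (i : ℕ) ω)) = 0) :
    (∑ i : Fin r,
        if Even (i : ℕ) then cmi p (U i) Y (hist U (i : ℕ))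
        else cmi p (U i) X (hist U (i : ℕ)))
      = mi p X Y - cmi p X Y (hist U r) :=
  stmt7_general r p hp1 X Y U hmarkovA hmarkovB
end

section
/- Let P and Q be probability measures on a finite set with Q(x) > 0 for all x, min_x Q(x) ≥ 1/m, and max_x P(x)/Q(x) ≤ m for some m > 1. Then χ²(P‖Q) ≤ ((m-1)²/(m ln m - m + 1)) · D(P‖Q), where D uses natural logarithm. -/
/-!
Write `φ = klFun`, `φ t = t log t - t + 1`. Since `∑ P = ∑ Q`, the linear part of `φ` contributes
nothing and `D(P‖Q) = ∑ₓ φ (P x / Q x) Q x`, while `χ²(P‖Q) = ∑ₓ (P x / Q x - 1)² Q x`; so it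
suffices that `(t - 1)² φ m ≤ (m - 1)² φ t` for `0 ≤ t ≤ m`.
For `t ≥ 1` this is monotonicity of `(t - 1)² / φ t`, whose derivative has the sign of
`(t + 1) log t - 2 (t - 1) ≥ 0`. For `t ≤ 1` it follows from `(t - 1)² / 2 ≤ φ t` and
`φ m ≤ (m - 1)² / 2`, both because `(t - 1)² / 2 - φ t` has derivative `t - 1 - log t ≥ 0`.
-/

open Finset Real InformationTheory

lemma monotoneOn_half_sq_sub_one_sub_klFun :
    MonotoneOn (fun t => (t - 1) ^ 2 / 2 - klFun t) (Set.Ici 0) := by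
  refine monotoneOn_of_hasDerivWithinAt_nonneg (f' := fun t => t - 1 - log t) (convex_Ici 0)
    (by fun_prop (disch := exact continuous_klFun)) (fun t ht => ?_) (fun t ht => ?_) <;>
    rw [interior_Ici] at ht
  · have hsq : HasDerivAt (fun t => (t - 1) ^ 2 / 2) (t - 1) t := by
      simpa using (((hasDerivAt_id t).sub_const 1).fun_pow 2).div_const 2
    exact (hsq.sub (hasDerivAt_klFun (ne_of_gt ht))).hasDerivWithinAt
  · linarith [log_le_sub_one_of_pos ht]

lemma half_sq_sub_one_le_klFun {t : ℝ} (ht₀ : 0 ≤ t) (ht₁ : t ≤ 1) :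
    (t - 1) ^ 2 / 2 ≤ klFun t := by
  have := monotoneOn_half_sq_sub_one_sub_klFun ht₀ (Set.mem_Ici.mpr zero_le_one) ht₁
  simp only [sub_self, klFun_one] at this
  linarith

lemma klFun_le_half_sq_sub_one {t : ℝ} (ht : 1 ≤ t) : klFun t ≤ (t - 1) ^ 2 / 2 := by
  have := monotoneOn_half_sq_sub_one_sub_klFun (Set.mem_Ici.mpr zero_le_one)
    (Set.mem_Ici.mpr (zero_le_one.trans ht)) ht
  simp only [sub_self, klFun_one] at this
  linarith

lemma klFun_pos {t : ℝ} (ht₀ : 0 ≤ t) (ht₁ : t ≠ 1) : 0 < klFun t :=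
  (klFun_nonneg ht₀).lt_of_ne' ((klFun_eq_zero_iff ht₀).not.mpr ht₁)

lemma two_mul_sub_one_le_add_one_mul_log {t : ℝ} (ht : 1 ≤ t) :
    2 * (t - 1) ≤ (t + 1) * log t := by
  have h := le_log_one_add_of_nonneg (sub_nonneg.mpr ht)
  rw [add_sub_cancel, div_le_iff₀ (by linarith), sub_add_eq_add_sub,
    show t + 2 - 1 = t + 1 by ring] at h
  linarith

lemma monotoneOn_sq_sub_one_div_klFun :
    MonotoneOn (fun t => (t - 1) ^ 2 / klFun t) (Set.Ioi 1) := by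
  have hφ {t : ℝ} (ht : t ∈ Set.Ioi 1) : klFun t ≠ 0 :=
    (klFun_pos (by linarith [Set.mem_Ioi.mp ht]) (ne_of_gt ht)).ne'
  refine monotoneOn_of_hasDerivWithinAt_nonneg
    (f' := fun t => (2 * (t - 1) * klFun t - (t - 1) ^ 2 * log t) / klFun t ^ 2) (convex_Ioi 1)
    (fun t ht => ((by fun_prop : Continuous fun t : ℝ => (t - 1) ^ 2).continuousAt.div
      continuous_klFun.continuousAt (hφ ht)).continuousWithinAt)
    (fun t ht => ?_) (fun t ht => ?_) <;> rw [interior_Ioi] at ht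
  · have hsq : HasDerivAt (fun t => (t - 1) ^ 2) (2 * (t - 1)) t := by
      simpa using ((hasDerivAt_id t).sub_const 1).fun_pow 2
    exact (hsq.div (hasDerivAt_klFun (by linarith [Set.mem_Ioi.mp ht])) (hφ ht)).hasDerivWithinAt
  · have ht₁ : 1 ≤ t := le_of_lt ht
    have hnum : 2 * (t - 1) * klFun t - (t - 1) ^ 2 * log t
        = (t - 1) * ((t + 1) * log t - 2 * (t - 1)) := by
      rw [klFun_apply]; ring
    rw [hnum]
    have := two_mul_sub_one_le_add_one_mul_log ht₁
    exact div_nonneg (mul_nonneg (by linarith) (by linarith)) (sq_nonneg _)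

lemma sq_sub_one_mul_klFun_le {m t : ℝ} (hm : 1 < m) (ht₀ : 0 ≤ t) (htm : t ≤ m) :
    (t - 1) ^ 2 * klFun m ≤ (m - 1) ^ 2 * klFun t := by
  rcases le_or_gt t 1 with ht₁ | ht₁
  · calc (t - 1) ^ 2 * klFun m ≤ (t - 1) ^ 2 * ((m - 1) ^ 2 / 2) := by
          gcongr; exact klFun_le_half_sq_sub_one hm.le
      _ = (m - 1) ^ 2 * ((t - 1) ^ 2 / 2) := by ring
      _ ≤ (m - 1) ^ 2 * klFun t := by gcongr; exact half_sq_sub_one_le_klFun ht₀ ht₁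
  · have h := monotoneOn_sq_sub_one_div_klFun ht₁ hm htm
    rwa [div_le_div_iff₀ (klFun_pos ht₀ (ne_of_gt ht₁))
      (klFun_pos (by linarith) (ne_of_gt hm))] at h

lemma sum_klFun_div_mul_eq {ι : Type*} (s : Finset ι) {P Q : ι → ℝ}
    (hQ : ∀ x ∈ s, Q x ≠ 0) (hPQ : ∑ x ∈ s, P x = ∑ x ∈ s, Q x) :
    ∑ x ∈ s, klFun (P x / Q x) * Q x = ∑ x ∈ s, P x * log (P x / Q x) := by
  have hterm : ∀ x ∈ s, klFun (P x / Q x) * Q x = P x * log (P x / Q x) + (Q x - P x) := by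
    intro x hx
    rw [klFun_apply]
    field_simp [hQ x hx]
    ring
  rw [sum_congr rfl hterm, sum_add_distrib, sum_sub_distrib, hPQ, sub_self, add_zero]

theorem stmt11_general {α : Type*} [Fintype α] (m : ℝ) (hm : 1 < m)
    (P Q : α → ℝ) (hP : ∀ x, 0 ≤ P x) (hP1 : ∑ x, P x = 1)
    (hQ : ∀ x, 0 < Q x) (hQ1 : ∑ x, Q x = 1)
    (hPQ : ∀ x, P x / Q x ≤ m) :
    ∑ x, (P x / Q x - 1) ^ 2 * Q x
      ≤ (m - 1) ^ 2 / (m * Real.log m - m + 1) * ∑ x, P x * Real.log (P x / Q x) := by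
  have hK : m * log m - m + 1 = klFun m := by rw [klFun_apply]; ring
  have hKpos : 0 < klFun m := klFun_pos (by linarith) (ne_of_gt hm)
  have hpointwise (x : α) : (P x / Q x - 1) ^ 2 ≤ (m - 1) ^ 2 / klFun m * klFun (P x / Q x) := by
    rw [div_mul_eq_mul_div, le_div_iff₀ hKpos]
    exact sq_sub_one_mul_klFun_le hm (div_nonneg (hP x) (hQ x).le) (hPQ x)
  rw [hK, ← sum_klFun_div_mul_eq univ (fun x _ => (hQ x).ne') (hP1.trans hQ1.symm), mul_sum]
  refine sum_le_sum fun x _ => ?_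
  rw [← mul_assoc]
  exact mul_le_mul_of_nonneg_right (hpointwise x) (hQ x).le

/-- Let `P, Q` be probability vectors on a finite set with
`Q x > 0`, `min Q ≥ 1/m` and `max P/Q ≤ m` for some `m > 1`.  Then
`χ²(P‖Q) ≤ ((m-1)²/(m ln m - m + 1)) · D(P‖Q)` (natural logarithm). -/
theorem stmt11 {α : Type*} [Fintype α] (m : ℝ) (hm : 1 < m)
    (P Q : α → ℝ) (hP : ∀ x, 0 ≤ P x) (hP1 : ∑ x, P x = 1)
    (hQ : ∀ x, 0 < Q x) (hQ1 : ∑ x, Q x = 1)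
    (hQm : ∀ x, 1 / m ≤ Q x) (hPQ : ∀ x, P x / Q x ≤ m) :
    ∑ x, (P x / Q x - 1) ^ 2 * Q x
      ≤ (m - 1) ^ 2 / (m * Real.log m - m + 1) * ∑ x, P x * Real.log (P x / Q x) :=
  stmt11_general m hm P Q hP hP1 hQ hQ1 hPQ
end
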